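/- arXiv:1705.04219 — 10 statements merged into one kernel-verified Lean document; each statement's English description precedes it below -/
import Mathlib

section
/- Let c_n = ∏_{j=1}^n (1+α_j) and s_n = Σ_{j=1}^n ∏_{k=0}^{j-1} (1+α_k) (with α₀ = 0, so the empty product equals 1). Then for every n ≥ 1 the solution of the covariance recursion is Σ_n = c_n · R ( R + s_n Σ₀ )⁻¹ Σ₀. -/
/-!
Writing `A = R + s Σ₀` and `B = R + (s + c) Σ₀`, the matrix `R + c R A⁻¹ Σ₀` factors as `R A⁻¹ B`,
so one step of the recursion sends `c R A⁻¹ Σ₀` to `c R B⁻¹ Σ₀`. Hence `Σ_n = c_n R (R + s_n Σ₀)⁻¹ Σ₀`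
propagates with `c_{n+1} = (1 + α_{n+1}) c_n` and `s_{n+1} = s_n + c_n`; at `n = 0` it reads
`Σ₀ = R R⁻¹ Σ₀`.
-/

open Matrix Finset

theorem Matrix.riccati_step {m K : Type*} [Fintype m] [DecidableEq m] [CommRing K]
    {R S : Matrix m m K} {s c : K} (hR : IsUnit R.det) (hA : IsUnit (R + s • S).det) :
    R * (R + c • (R * (R + s • S)⁻¹ * S))⁻¹ * (c • (R * (R + s • S)⁻¹ * S)) =
      c • (R * (R + (s + c) • S)⁻¹ * S) := by
  set A := R + s • S
  set B := R + (s + c) • S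
  have hfactor : R + c • (R * A⁻¹ * S) = R * A⁻¹ * B := by
    have hB_eq : B = A + c • S := by simp only [A, B, add_smul]; abel
    rw [hB_eq, Matrix.mul_add, nonsing_inv_mul_cancel_right _ _ hA, Matrix.mul_smul]
  rw [hfactor, Matrix.mul_inv_rev, Matrix.mul_inv_rev, nonsing_inv_nonsing_inv _ hA,
    Matrix.mul_smul]
  congr 1
  calc R * (B⁻¹ * (A * R⁻¹)) * (R * A⁻¹ * S) = R * B⁻¹ * (A * (R⁻¹ * R) * A⁻¹) * S := by
        simp only [Matrix.mul_assoc]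
    _ = R * B⁻¹ * S := by
        rw [nonsing_inv_mul _ hR, Matrix.mul_one, mul_nonsing_inv _ hA, Matrix.mul_one]

theorem Matrix.PosDef.isUnit_det_add_smul {m : Type*} [Fintype m] [DecidableEq m]
    {R S : Matrix m m ℝ} (hR : R.PosDef) (hS : S.PosDef) {s : ℝ} (hs : 0 ≤ s) :
    IsUnit (R + s • S).det :=
  (hR.add_posSemidef (hS.posSemidef.smul hs)).isUnit.map detMonoidHom

theorem Finset.prod_range_succ_eq_prod_Icc {M : Type*} [CommMonoid M] {f : ℕ → M} (hf : f 0 = 1)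
    (n : ℕ) : ∏ k ∈ range (n + 1), f k = ∏ k ∈ Icc 1 n, f k := by
  rw [prod_range_eq_mul_Ico (n := n + 1) f n.succ_pos, hf, one_mul, ← Ico_add_one_right_eq_Icc]

theorem stmt_0_general {d : ℕ}
    (R S0 : Matrix (Fin d) (Fin d) ℝ) (hR : R.PosDef) (hS0pd : S0.PosDef)
    (α : ℕ → ℝ) (hα0 : α 0 = 0) (hαnn : ∀ n, 0 ≤ α n)
    (S : ℕ → Matrix (Fin d) (Fin d) ℝ) (hS0 : S 0 = S0)
    (hrec : ∀ n, S (n + 1) = (1 + α (n + 1)) • (R * (R + S n)⁻¹ * S n)) :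
    ∀ n, 1 ≤ n →
      S n = (∏ j ∈ Icc 1 n, (1 + α j)) •
        (R * (R + (∑ j ∈ Icc 1 n, ∏ k ∈ range j, (1 + α k)) • S0)⁻¹ * S0) := by
  have hR_det : IsUnit R.det := hR.isUnit.map detMonoidHom
  have hfactor_nonneg (j : ℕ) : 0 ≤ 1 + α j := by linarith [hαnn j]
  have hsum_nonneg (n : ℕ) : 0 ≤ ∑ j ∈ Icc 1 n, ∏ k ∈ range j, (1 + α k) :=
    sum_nonneg fun j _ => prod_nonneg fun k _ => hfactor_nonneg k
  have hsum_succ (n : ℕ) : ∑ j ∈ Icc 1 (n + 1), ∏ k ∈ range j, (1 + α k) =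
      ∑ j ∈ Icc 1 n, ∏ k ∈ range j, (1 + α k) + ∏ j ∈ Icc 1 n, (1 + α j) := by
    rw [sum_Icc_succ_top (Nat.le_add_left 1 n), prod_range_succ_eq_prod_Icc (by simp [hα0])]
  rintro n -
  induction n with
  | zero => simp [hS0, mul_nonsing_inv _ hR_det]
  | succ n ih =>
    rw [hrec, ih, riccati_step hR_det (hR.isUnit_det_add_smul hS0pd (hsum_nonneg n)), ← hsum_succ,
      prod_Icc_succ_top (Nat.le_add_left 1 n), smul_smul, mul_comm]

/-- Closed-form solution of the regularized-particle-filter covariance recursion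
`Σ_n = (1+α_n) R (R+Σ_{n-1})⁻¹ Σ_{n-1}`: with `c_n = ∏_{j=1}^n (1+α_j)` and
`s_n = ∑_{j=1}^n ∏_{k=0}^{j-1} (1+α_k)` (where `α₀ = 0`), one has
`Σ_n = c_n • R (R + s_n Σ₀)⁻¹ Σ₀` for all `n ≥ 1`. -/
theorem stmt_0 {d : ℕ} (hd : 1 ≤ d)
    (R S0 : Matrix (Fin d) (Fin d) ℝ) (hR : R.PosDef) (hS0pd : S0.PosDef)
    (α : ℕ → ℝ) (hα0 : α 0 = 0) (hαnn : ∀ n, 0 ≤ α n)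
    (S : ℕ → Matrix (Fin d) (Fin d) ℝ) (hS0 : S 0 = S0)
    (hrec : ∀ n, S (n + 1) = (1 + α (n + 1)) • (R * (R + S n)⁻¹ * S n)) :
    ∀ n, 1 ≤ n →
      S n = (∏ j ∈ Icc 1 n, (1 + α j)) •
        (R * (R + (∑ j ∈ Icc 1 n, ∏ k ∈ range j, (1 + α k)) • S0)⁻¹ * S0) :=
  stmt_0_general R S0 hR hS0pd α hα0 hαnn S hS0 hrec
end

section
/- Let c_n = ∏_{j=1}^n (1+α_j) and, for vectors μ₀ ∈ ℝ^d and observations y₁,…,y_n ∈ ℝ^d, define μ_n recursively by (Σ_{n-1}⁻¹ + R⁻¹) μ_n = Σ_{n-1}⁻¹ μ_{n-1} + R⁻¹ y_n. Then for every n ≥ 1: μ_n = c_n⁻¹ Σ_n Σ₀⁻¹ μ₀ + ( I − c_n⁻¹ Σ_n Σ₀⁻¹ ) · ( Σ_{j=1}^n ∏_{k=0}^{j-1}(1+α_k) y_j ) / ( Σ_{j=1}^n ∏_{k=0}^{j-1}(1+α_k) ), where Σ_n = c_n R(R + s_n Σ₀)⁻¹ Σ₀ with s_n = Σ_{j=1}^n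 ∏_{k=0}^{j-1}(1+α_k). -/
/-!
Work in information form. The identity `R (R + Σ)⁻¹ Σ = (Σ⁻¹ + R⁻¹)⁻¹` turns the covariance
recursion into `Σₙ₊₁⁻¹ = (1 + αₙ₊₁)⁻¹ (Σₙ⁻¹ + R⁻¹)`, so `Σₙ⁻¹ = cₙ⁻¹ Pₙ` with
`Pₙ = Σ₀⁻¹ + sₙ R⁻¹` (`precision R S0 α n`); since `α₀ = 0`, the increment `sₙ₊₁ - sₙ` is `cₙ`.
Multiplying the mean recursion by `cₙ` gives `Pₙ₊₁ μₙ₊₁ = Pₙ μₙ + cₙ R⁻¹ yₙ₊₁`, which telescopes to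
`Pₙ μₙ = Σ₀⁻¹ μ₀ + R⁻¹ ∑ⱼ wⱼ yⱼ` with `wⱼ = ∏_{k<j} (1 + αₖ)`. Solving for `μₙ` and using
`1 - Pₙ⁻¹ Σ₀⁻¹ = sₙ Pₙ⁻¹ R⁻¹` yields the stated formula, once `Pₙ⁻¹` is written back as `R (R + sₙ Σ₀)⁻¹ Σ₀`.
-/

open Matrix Finset

section InformationForm

variable {ι K : Type*} [Fintype ι] [DecidableEq ι] [Field K]

theorem Matrix.inv_smul_of_ne_zero {A : Matrix ι ι K} {k : K} (hk : k ≠ 0) (hA : IsUnit A.det) :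
    (k • A)⁻¹ = k⁻¹ • A⁻¹ := by
  simpa [Units.smul_def] using Matrix.inv_smul' A (Units.mk0 k hk) hA

theorem Matrix.inv_add_smul_inv {R S : Matrix ι ι K} (hR : IsUnit R.det) (hS : IsUnit S.det)
    (s : K) : (S⁻¹ + s • R⁻¹)⁻¹ = R * (R + s • S)⁻¹ * S := by
  have h : S⁻¹ + s • R⁻¹ = S⁻¹ * (R + s • S) * R⁻¹ := by
    rw [Matrix.mul_add, Matrix.add_mul, mul_nonsing_inv_cancel_right _ _ hR, Matrix.mul_smul,
      nonsing_inv_mul _ hS, Matrix.smul_mul, Matrix.one_mul]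
  rw [h, mul_inv_rev, mul_inv_rev, nonsing_inv_nonsing_inv _ hR, nonsing_inv_nonsing_inv _ hS,
    Matrix.mul_assoc]

theorem Matrix.inv_smul_mul_inv_add_mul {R S : Matrix ι ι K} (hR : IsUnit R.det)
    (hS : IsUnit S.det) (hSR : IsUnit (S⁻¹ + R⁻¹).det) {a : K} (ha : a ≠ 0) :
    (a • (R * (R + S)⁻¹ * S))⁻¹ = a⁻¹ • (S⁻¹ + R⁻¹) := by
  have h := inv_add_smul_inv hR hS 1
  rw [one_smul, one_smul] at h
  rw [← h, inv_smul_of_ne_zero ha (isUnit_nonsing_inv_det_iff.2 hSR),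
    nonsing_inv_nonsing_inv _ hSR]

theorem Matrix.mulVec_eq_of_inv_add_smul_inv_mulVec {R S : Matrix ι ι K} {s : K} (hs : s ≠ 0)
    (hP : IsUnit (S⁻¹ + s • R⁻¹).det) {x m v : ι → K}
    (h : (S⁻¹ + s • R⁻¹) *ᵥ x = S⁻¹ *ᵥ m + R⁻¹ *ᵥ v) :
    x = ((S⁻¹ + s • R⁻¹)⁻¹ * S⁻¹) *ᵥ m + (1 - (S⁻¹ + s • R⁻¹)⁻¹ * S⁻¹) *ᵥ (s⁻¹ • v) := by
  set P := S⁻¹ + s • R⁻¹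
  have hgain : 1 - P⁻¹ * S⁻¹ = s • (P⁻¹ * R⁻¹) := by
    conv_lhs => rw [← nonsing_inv_mul P hP, ← Matrix.mul_sub]
    simp [P]
  rw [hgain, smul_mulVec, mulVec_smul, smul_smul, mul_inv_cancel₀ hs, one_smul,
    ← mulVec_mulVec, ← mulVec_mulVec, ← mulVec_add, ← h, mulVec_mulVec, nonsing_inv_mul _ hP,
    one_mulVec]

end InformationForm

namespace RegularizedParticleFilter

def inflation (α : ℕ → ℝ) (n : ℕ) : ℝ := ∏ j ∈ Icc 1 n, (1 + α j)

def weight (α : ℕ → ℝ) (j : ℕ) : ℝ := ∏ k ∈ range j, (1 + α k)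

variable {α : ℕ → ℝ}

theorem inflation_pos (hα : ∀ n, 0 ≤ α n) (n : ℕ) : 0 < inflation α n :=
  prod_pos fun j _ ↦ by linarith [hα j]

theorem inflation_zero : inflation α 0 = 1 := by
  simp [inflation]

theorem inflation_succ (n : ℕ) : inflation α (n + 1) = inflation α n * (1 + α (n + 1)) :=
  prod_Icc_succ_top (by omega) _

theorem weight_succ_eq_inflation (hα0 : α 0 = 0) (n : ℕ) : weight α (n + 1) = inflation α n := by
  induction n with
  | zero => simp [weight, inflation_zero, hα0]
  | succ n ih => rw [weight, prod_range_succ, ← weight, ih, inflation_succ]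

theorem sum_weight_pos (hα : ∀ n, 0 ≤ α n) {n : ℕ} (hn : 1 ≤ n) :
    0 < ∑ j ∈ Icc 1 n, weight α j :=
  sum_pos (fun j _ ↦ prod_pos fun k _ ↦ by linarith [hα k]) (nonempty_Icc.mpr hn)

variable {ι : Type*} [Fintype ι] [DecidableEq ι] {R S0 : Matrix ι ι ℝ}

noncomputable def precision (R S0 : Matrix ι ι ℝ) (α : ℕ → ℝ) (n : ℕ) : Matrix ι ι ℝ :=
  S0⁻¹ + (∑ j ∈ Icc 1 n, weight α j) • R⁻¹

theorem precision_zero : precision R S0 α 0 = S0⁻¹ := by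
  simp [precision]

theorem precision_succ (hα0 : α 0 = 0) (n : ℕ) :
    precision R S0 α (n + 1) = precision R S0 α n + inflation α n • R⁻¹ := by
  rw [precision, precision, sum_Icc_succ_top (by omega), weight_succ_eq_inflation hα0, add_smul,
    add_assoc]

theorem precision_posDef (hR : R.PosDef) (hS0 : S0.PosDef) (hα : ∀ n, 0 ≤ α n) (n : ℕ) :
    (precision R S0 α n).PosDef :=
  hS0.inv.add_posSemidef <|
    hR.inv.posSemidef.smul <| sum_nonneg fun j _ ↦ prod_nonneg fun k _ ↦ by linarith [hα k]

theorem inv_inflation_smul_precision_add_inv (hα0 : α 0 = 0) (hα : ∀ n, 0 ≤ α n) (n : ℕ) :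
    (inflation α n)⁻¹ • precision R S0 α n + R⁻¹ =
      (inflation α n)⁻¹ • precision R S0 α (n + 1) := by
  rw [precision_succ hα0, smul_add, smul_smul, inv_mul_cancel₀ (inflation_pos hα n).ne', one_smul]

theorem inv_cov_eq_inv_inflation_smul_precision (hR : R.PosDef) (hS0 : S0.PosDef)
    (hα0 : α 0 = 0) (hα : ∀ n, 0 ≤ α n) {S : ℕ → Matrix ι ι ℝ} (hS_zero : S 0 = S0)
    (hS_succ : ∀ n, S (n + 1) = (1 + α (n + 1)) • (R * (R + S n)⁻¹ * S n)) (n : ℕ) :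
    (S n)⁻¹ = (inflation α n)⁻¹ • precision R S0 α n := by
  induction n with
  | zero => rw [hS_zero, inflation_zero, precision_zero, inv_one, one_smul]
  | succ n ih =>
    have hc := inv_pos.2 (inflation_pos hα n)
    have hS_unit : IsUnit (S n).det := by
      rw [← isUnit_nonsing_inv_det_iff, ih]
      exact ((precision_posDef hR hS0 hα n).smul hc).det_pos.ne'.isUnit
    have hSR_unit : IsUnit ((S n)⁻¹ + R⁻¹).det := by
      rw [ih, inv_inflation_smul_precision_add_inv hα0 hα]
      exact ((precision_posDef hR hS0 hα (n + 1)).smul hc).det_pos.ne'.isUnit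
    rw [hS_succ, inv_smul_mul_inv_add_mul hR.det_pos.ne'.isUnit hS_unit hSR_unit
      (by linarith [hα (n + 1)]), ih, inv_inflation_smul_precision_add_inv hα0 hα, smul_smul,
      inflation_succ, mul_inv, mul_comm]

theorem precision_mulVec_mean_eq (hR : R.PosDef) (hS0 : S0.PosDef) (hα0 : α 0 = 0)
    (hα : ∀ n, 0 ≤ α n) {S : ℕ → Matrix ι ι ℝ} (hS_zero : S 0 = S0)
    (hS_succ : ∀ n, S (n + 1) = (1 + α (n + 1)) • (R * (R + S n)⁻¹ * S n))
    {μ y : ℕ → ι → ℝ}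
    (hμ : ∀ n, ((S n)⁻¹ + R⁻¹) *ᵥ μ (n + 1) = (S n)⁻¹ *ᵥ μ n + R⁻¹ *ᵥ y (n + 1)) (n : ℕ) :
    precision R S0 α n *ᵥ μ n = S0⁻¹ *ᵥ μ 0 + R⁻¹ *ᵥ ∑ j ∈ Icc 1 n, weight α j • y j := by
  induction n with
  | zero => simp [precision_zero]
  | succ n ih =>
    have h := hμ n
    rw [inv_cov_eq_inv_inflation_smul_precision hR hS0 hα0 hα hS_zero hS_succ,
      inv_inflation_smul_precision_add_inv hα0 hα, smul_mulVec, smul_mulVec] at h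
    have hstep : precision R S0 α (n + 1) *ᵥ μ (n + 1) =
        precision R S0 α n *ᵥ μ n + inflation α n • R⁻¹ *ᵥ y (n + 1) := by
      simpa [smul_add, smul_smul, mul_inv_cancel₀ (inflation_pos hα n).ne'] using
        congrArg (inflation α n • ·) h
    rw [hstep, ih, sum_Icc_succ_top (by omega), mulVec_add, weight_succ_eq_inflation hα0,
      mulVec_smul, add_assoc]

end RegularizedParticleFilter

open RegularizedParticleFilter in
theorem stmt_1_general {d : ℕ}
    (R S0 : Matrix (Fin d) (Fin d) ℝ) (hR : R.PosDef) (hS0pd : S0.PosDef)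
    (α : ℕ → ℝ) (hα0 : α 0 = 0) (hαnn : ∀ n, 0 ≤ α n)
    (S : ℕ → Matrix (Fin d) (Fin d) ℝ) (hS0 : S 0 = S0)
    (hrec : ∀ n, S (n + 1) = (1 + α (n + 1)) • (R * (R + S n)⁻¹ * S n))
    (μ : ℕ → Fin d → ℝ) (μ0 : Fin d → ℝ) (hμ0 : μ 0 = μ0)
    (y : ℕ → Fin d → ℝ)
    (hμrec : ∀ n, ((S n)⁻¹ + R⁻¹).mulVec (μ (n + 1)) =
      (S n)⁻¹.mulVec (μ n) + R⁻¹.mulVec (y (n + 1))) :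
    ∀ n, 1 ≤ n →
      μ n =
        ((∏ j ∈ Icc 1 n, (1 + α j))⁻¹ •
            (((∏ j ∈ Icc 1 n, (1 + α j)) •
              (R * (R + (∑ j ∈ Icc 1 n, ∏ k ∈ range j, (1 + α k)) • S0)⁻¹ * S0)) *
              S0⁻¹)).mulVec μ0
        + ((1 : Matrix (Fin d) (Fin d) ℝ) -
            (∏ j ∈ Icc 1 n, (1 + α j))⁻¹ •
              (((∏ j ∈ Icc 1 n, (1 + α j)) •
                (R * (R + (∑ j ∈ Icc 1 n, ∏ k ∈ range j, (1 + α k)) • S0)⁻¹ * S0)) *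
                S0⁻¹)).mulVec
            ((∑ j ∈ Icc 1 n, ∏ k ∈ range j, (1 + α k))⁻¹ •
              ∑ j ∈ Icc 1 n, (∏ k ∈ range j, (1 + α k)) • y j) := by
  intro n hn
  have hc : (∏ j ∈ Icc 1 n, (1 + α j)) ≠ 0 := (inflation_pos hαnn n).ne'
  rw [Matrix.smul_mul, smul_smul, inv_mul_cancel₀ hc, one_smul,
    ← inv_add_smul_inv hR.det_pos.ne'.isUnit hS0pd.det_pos.ne'.isUnit]
  exact mulVec_eq_of_inv_add_smul_inv_mulVec (sum_weight_pos hαnn hn).ne'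
    (precision_posDef hR hS0pd hαnn n).det_pos.ne'.isUnit
    (hμ0 ▸ precision_mulVec_mean_eq hR hS0pd hα0 hαnn hS0 hrec hμrec n)

/-- Closed-form solution for the posterior mean recursion
`(Σ_{n-1}⁻¹ + R⁻¹) μ_n = Σ_{n-1}⁻¹ μ_{n-1} + R⁻¹ y_n` of the regularized particle
filter in the stationary linear Gaussian model: with `c_n = ∏_{j=1}^n (1+α_j)`,
`s_n = ∑_{j=1}^n ∏_{k=0}^{j-1}(1+α_k)` and `Σ_n = c_n R (R + s_n Σ₀)⁻¹ Σ₀`,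
`μ_n = c_n⁻¹ Σ_n Σ₀⁻¹ μ₀ + (I − c_n⁻¹ Σ_n Σ₀⁻¹) (∑_{j=1}^n ∏_{k=0}^{j-1}(1+α_k) y_j) / s_n`. -/
theorem stmt_1 {d : ℕ} (hd : 1 ≤ d)
    (R S0 : Matrix (Fin d) (Fin d) ℝ) (hR : R.PosDef) (hS0pd : S0.PosDef)
    (α : ℕ → ℝ) (hα0 : α 0 = 0) (hαnn : ∀ n, 0 ≤ α n)
    (S : ℕ → Matrix (Fin d) (Fin d) ℝ) (hS0 : S 0 = S0)
    (hrec : ∀ n, S (n + 1) = (1 + α (n + 1)) • (R * (R + S n)⁻¹ * S n))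
    (μ : ℕ → Fin d → ℝ) (μ0 : Fin d → ℝ) (hμ0 : μ 0 = μ0)
    (y : ℕ → Fin d → ℝ)
    (hμrec : ∀ n, ((S n)⁻¹ + R⁻¹).mulVec (μ (n + 1)) =
      (S n)⁻¹.mulVec (μ n) + R⁻¹.mulVec (y (n + 1))) :
    ∀ n, 1 ≤ n →
      μ n =
        ((∏ j ∈ Icc 1 n, (1 + α j))⁻¹ •
            (((∏ j ∈ Icc 1 n, (1 + α j)) •
              (R * (R + (∑ j ∈ Icc 1 n, ∏ k ∈ range j, (1 + α k)) • S0)⁻¹ * S0)) *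
              S0⁻¹)).mulVec μ0
        + ((1 : Matrix (Fin d) (Fin d) ℝ) -
            (∏ j ∈ Icc 1 n, (1 + α j))⁻¹ •
              (((∏ j ∈ Icc 1 n, (1 + α j)) •
                (R * (R + (∑ j ∈ Icc 1 n, ∏ k ∈ range j, (1 + α k)) • S0)⁻¹ * S0)) *
                S0⁻¹)).mulVec
            ((∑ j ∈ Icc 1 n, ∏ k ∈ range j, (1 + α k))⁻¹ •
              ∑ j ∈ Icc 1 n, (∏ k ∈ range j, (1 + α k)) • y j) :=
  stmt_1_general R S0 hR hS0pd α hα0 hαnn S hS0 hrec μ μ0 hμ0 y hμrec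
end

section
/- Suppose the bandwidth sequence is constant: α_n = α for all n ≥ 1, with α > 0. Then Σ_n converges to α·R as n → ∞, and the convergence is exponentially fast: there exists a constant C > 0 such that ‖Σ_n − α R‖ ≤ C (1+α)^{-n} for all n ≥ 1. In particular, for any finite bandwidth factor α > 0 the covariance of the regularized particle filter remains bounded below (in the Loewner order, asymptotically) by the positive definite matrix α R, no matter how many observations are processed. -/
/-!
In information form the recursion is affine: `Σₙ₊₁⁻¹ = (1 + α)⁻¹ (R⁻¹ + Σₙ⁻¹)`, a contraction
with fixed point `(α R)⁻¹`, so `Σₙ⁻¹ - (α R)⁻¹ = (1 + α)⁻ⁿ (Σ₀⁻¹ - (α R)⁻¹)`. Continuity of matrix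
inversion gives `Σₙ → α R`, and the identity `X - Y = X (Y⁻¹ - X⁻¹) Y` turns the geometric decay
of the information error into `Σₙ - α R = -(1 + α)⁻ⁿ Σₙ (Σ₀⁻¹ - (α R)⁻¹) (α R)`, where the factor
after the scalar converges and is therefore bounded.
-/

open Matrix Finset Filter

attribute [local instance] Matrix.normedAddCommGroup Matrix.normedSpace

namespace Matrix

variable {n : Type*} [Fintype n] [DecidableEq n]

theorem inv_smul_of_ne_zero_s2 {K : Type*} [Field K] {A : Matrix n n K} {k : K} (hk : k ≠ 0)
    (hA : IsUnit A.det) : (k • A)⁻¹ = k⁻¹ • A⁻¹ := by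
  have := invertibleOfNonzero hk
  rw [inv_smul _ k hA, invOf_eq_inv]

variable {α : Type*} [CommRing α]

theorem sub_eq_mul_inv_sub_inv_mul {X Y : Matrix n n α} (hX : IsUnit X) (hY : IsUnit Y) :
    X - Y = X * (Y⁻¹ - X⁻¹) * Y := by
  rw [mul_sub, sub_mul, nonsing_inv_mul_cancel_right _ _ ((isUnit_iff_isUnit_det Y).1 hY),
    mul_nonsing_inv _ ((isUnit_iff_isUnit_det X).1 hX), one_mul]

theorem mul_add_inv_mul_eq_inv_add_inv {R S : Matrix n n α} (hR : IsUnit R) (hS : IsUnit S) :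
    R * (R + S)⁻¹ * S = (R⁻¹ + S⁻¹)⁻¹ := by
  rw [add_comm R⁻¹, inv_add_inv (iff_of_true hS hR), add_comm S, mul_inv_rev, mul_inv_rev,
    nonsing_inv_nonsing_inv _ ((isUnit_iff_isUnit_det _).1 hR),
    nonsing_inv_nonsing_inv _ ((isUnit_iff_isUnit_det _).1 hS), mul_assoc]

end Matrix

namespace CovarianceRecursion

variable {n : Type*} [Fintype n] [DecidableEq n] {R : Matrix n n ℝ} {α : ℝ}
  {S : ℕ → Matrix n n ℝ}

theorem posDef (hR : R.PosDef) (hS0 : (S 0).PosDef) (hα : 0 < 1 + α)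
    (hrec : ∀ n, S (n + 1) = (1 + α) • (R * (R + S n)⁻¹ * S n)) (n : ℕ) : (S n).PosDef := by
  induction n with
  | zero => exact hS0
  | succ n ih =>
    rw [hrec n, mul_add_inv_mul_eq_inv_add_inv hR.isUnit ih.isUnit]
    exact (hR.inv.add ih.inv).inv.smul hα

theorem inv_succ (hR : R.PosDef) (hS0 : (S 0).PosDef) (hα : 0 < 1 + α)
    (hrec : ∀ n, S (n + 1) = (1 + α) • (R * (R + S n)⁻¹ * S n)) (n : ℕ) :
    (S (n + 1))⁻¹ = (1 + α)⁻¹ • (R⁻¹ + (S n)⁻¹) := by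
  have hinfo := hR.inv.add (posDef hR hS0 hα hrec n).inv
  rw [hrec n, mul_add_inv_mul_eq_inv_add_inv hR.isUnit (posDef hR hS0 hα hrec n).isUnit,
    inv_smul_of_ne_zero_s2 hα.ne' hinfo.inv.det_pos.ne'.isUnit,
    nonsing_inv_nonsing_inv _ hinfo.det_pos.ne'.isUnit]

theorem inv_sub_eq_pow_smul (hR : R.PosDef) (hS0 : (S 0).PosDef) (hα : 0 < α)
    (hrec : ∀ n, S (n + 1) = (1 + α) • (R * (R + S n)⁻¹ * S n)) (n : ℕ) :
    (S n)⁻¹ - α⁻¹ • R⁻¹ = ((1 + α) ^ n)⁻¹ • ((S 0)⁻¹ - α⁻¹ • R⁻¹) := by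
  induction n with
  | zero => simp
  | succ n ih =>
    rw [inv_succ hR hS0 (by linarith) hrec, eq_add_of_sub_eq ih, pow_succ, mul_inv]
    match_scalars
    · field_simp
      ring
    · ring

theorem tendsto (hR : R.PosDef) (hS0 : (S 0).PosDef) (hα : 0 < α)
    (hrec : ∀ n, S (n + 1) = (1 + α) • (R * (R + S n)⁻¹ * S n)) :
    Tendsto S atTop (nhds (α • R)) := by
  have hαR := hR.smul hα
  have hq : Tendsto (fun n : ℕ ↦ ((1 + α) ^ n)⁻¹) atTop (nhds 0) :=
    tendsto_inv_atTop_zero.comp (tendsto_pow_atTop_atTop_of_one_lt (by linarith))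
  have hinv : Tendsto (fun n ↦ (S n)⁻¹) atTop (nhds (α • R)⁻¹) := by
    rw [inv_smul_of_ne_zero_s2 hα.ne' hR.det_pos.ne'.isUnit, ← tendsto_sub_nhds_zero_iff,
      funext (inv_sub_eq_pow_smul hR hS0 hα hrec), ← zero_smul ℝ ((S 0)⁻¹ - α⁻¹ • R⁻¹)]
    exact hq.smul_const _
  have hcont : ContinuousAt Inv.inv (α • R)⁻¹ := by
    refine continuousAt_matrix_inv _ ?_
    rw [Ring.inverse_eq_inv']
    exact continuousAt_inv₀ hαR.inv.det_pos.ne'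
  have hinv_inv : Inv.inv ∘ (fun n ↦ (S n)⁻¹) = S :=
    funext fun n ↦ nonsing_inv_nonsing_inv _
      (posDef hR hS0 (by linarith) hrec n).det_pos.ne'.isUnit
  simpa only [hinv_inv, nonsing_inv_nonsing_inv _ hαR.det_pos.ne'.isUnit] using
    hcont.tendsto.comp hinv

theorem sub_eq_neg_pow_smul (hR : R.PosDef) (hS0 : (S 0).PosDef) (hα : 0 < α)
    (hrec : ∀ n, S (n + 1) = (1 + α) • (R * (R + S n)⁻¹ * S n)) (n : ℕ) :
    S n - α • R = -(((1 + α) ^ n)⁻¹ • (S n * ((S 0)⁻¹ - α⁻¹ • R⁻¹) * (α • R))) := by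
  rw [sub_eq_mul_inv_sub_inv_mul (posDef hR hS0 (by linarith) hrec n).isUnit
      (hR.smul hα).isUnit, inv_smul_of_ne_zero_s2 hα.ne' hR.det_pos.ne'.isUnit, ← neg_sub,
    inv_sub_eq_pow_smul hR hS0 hα hrec, mul_neg, neg_mul, Matrix.mul_smul (S n), Matrix.smul_mul]

end CovarianceRecursion

theorem stmt_2_general {d : ℕ}
    (R S0 : Matrix (Fin d) (Fin d) ℝ) (hR : R.PosDef) (hS0pd : S0.PosDef)
    (α : ℝ) (hα : 0 < α)
    (S : ℕ → Matrix (Fin d) (Fin d) ℝ) (hS0 : S 0 = S0)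
    (hrec : ∀ n, S (n + 1) = (1 + α) • (R * (R + S n)⁻¹ * S n)) :
    Tendsto S atTop (nhds (α • R)) ∧
      ∃ C > 0, ∀ n, 1 ≤ n → ‖S n - α • R‖ ≤ C * ((1 + α) ^ n)⁻¹ := by
  have hS0' : (S 0).PosDef := hS0 ▸ hS0pd
  have hlim := CovarianceRecursion.tendsto hR hS0' hα hrec
  obtain ⟨K, hK⟩ := isBounded_iff_forall_norm_le.1 <| Metric.isBounded_range_of_tendsto _ <|
    (hlim.mul_const ((S 0)⁻¹ - α⁻¹ • R⁻¹)).mul_const (α • R)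
  refine ⟨hlim, max K 1, by positivity, fun n _ ↦ ?_⟩
  rw [CovarianceRecursion.sub_eq_neg_pow_smul hR hS0' hα hrec, norm_neg, norm_smul,
    Real.norm_of_nonneg (by positivity), mul_comm]
  exact mul_le_mul_of_nonneg_right ((hK _ ⟨n, rfl⟩).trans (le_max_left _ _)) (by positivity)

/-- RPF fixed point: with a constant bandwidth factor `α > 0`, the covariance
recursion `Σ_n = (1+α) R (R+Σ_{n-1})⁻¹ Σ_{n-1}` converges to `α R`, exponentially
fast: `‖Σ_n − α R‖ ≤ C (1+α)^{-n}` for some `C > 0` and all `n ≥ 1`. -/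
theorem stmt_2 {d : ℕ} (hd : 1 ≤ d)
    (R S0 : Matrix (Fin d) (Fin d) ℝ) (hR : R.PosDef) (hS0pd : S0.PosDef)
    (α : ℝ) (hα : 0 < α)
    (S : ℕ → Matrix (Fin d) (Fin d) ℝ) (hS0 : S 0 = S0)
    (hrec : ∀ n, S (n + 1) = (1 + α) • (R * (R + S n)⁻¹ * S n)) :
    Tendsto S atTop (nhds (α • R)) ∧
      ∃ C > 0, ∀ n, 1 ≤ n → ‖S n - α • R‖ ≤ C * ((1 + α) ^ n)⁻¹ :=
  stmt_2_general R S0 hR hS0pd α hα S hS0 hrec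
end

section
/- Fix α > 0 and set w_j = (1+α)^{j-1} for j ≥ 1. Then lim_{n→∞} ( Σ_{j=1}^n w_j² ) / ( Σ_{j=1}^n w_j )² = α/(2+α). Consequently, if η₁, η₂, … are independent real random variables with mean 0 and common variance R > 0, the exponentially weighted average μ_n = (Σ_{j=1}^n w_j η_j)/(Σ_{j=1}^n w_j) satisfies lim_{n→∞} E[μ_n²] = α R/(2+α), which is the residual covariance of the regularized particle filter mean around the true state when resampling with constant bandwidth factor α at every step. -/
open Finset Filter MeasureTheory ProbabilityTheory Topology

/-!
With `r = 1 + α`, both sums are geometric, so the ratio equals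
`(r - 1)/(r + 1) · (rⁿ + 1)/(rⁿ - 1)`, which tends to `(r - 1)/(r + 1) = α/(2 + α)`.
For centered, pairwise independent noise of variance `R` the second moment of `∑ wⱼ ηⱼ`
is its variance `R ∑ wⱼ²`, so `E[μₙ²]` is `R` times that same ratio.
-/

theorem sum_Icc_one_comp_sub_one {M : Type*} [AddCommMonoid M] (f : ℕ → M) (n : ℕ) :
    ∑ j ∈ Icc 1 n, f (j - 1) = ∑ k ∈ range n, f k := by
  rw [← Ico_add_one_right_eq_Icc, sum_Ico_eq_sum_range]
  simp

theorem geom_sum_sq_div_sq_geom_sum {K : Type*} [Field K] {r : K} (h₁ : r ≠ 1) (h₂ : r ≠ -1)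
    (n : ℕ) :
    (∑ i ∈ range n, (r ^ i) ^ 2) / (∑ i ∈ range n, r ^ i) ^ 2 =
      (r - 1) / (r + 1) * ((r ^ n + 1) / (r ^ n - 1)) := by
  have hsq : r ^ 2 ≠ 1 := sq_ne_one_iff.mpr ⟨h₁, h₂⟩
  simp_rw [← pow_mul, mul_comm _ 2, pow_mul]
  rw [geom_sum_eq h₁, geom_sum_eq hsq]
  have h₁' : r - 1 ≠ 0 := sub_ne_zero.mpr h₁
  have h₂' : r + 1 ≠ 0 := by rwa [Ne, add_eq_zero_iff_eq_neg]
  -- if `rⁿ = 1` both sides are junk `x / 0 = 0`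
  rcases eq_or_ne (r ^ n) 1 with hn | hn
  · simp [hn]
  have hn' : r ^ n - 1 ≠ 0 := sub_ne_zero.mpr hn
  have : r ^ 2 - 1 = (r - 1) * (r + 1) := by ring
  rw [this]
  field_simp
  ring

theorem tendsto_geom_sum_sq_div_sq_geom_sum {r : ℝ} (hr : 1 < r) :
    Tendsto (fun n ↦ (∑ i ∈ range n, (r ^ i) ^ 2) / (∑ i ∈ range n, r ^ i) ^ 2) atTop
      (𝓝 ((r - 1) / (r + 1))) := by
  simp_rw [geom_sum_sq_div_sq_geom_sum hr.ne' (by linarith : r ≠ -1)]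
  have hpow : Tendsto (fun n : ℕ ↦ r ^ n) atTop atTop := tendsto_pow_atTop_atTop_of_one_lt hr
  have hinv : Tendsto (fun t : ℝ ↦ 1 + 2 * (t - 1)⁻¹) atTop (𝓝 1) := by
    have hshift := tendsto_atTop_add_const_right atTop (-1 : ℝ) tendsto_id
    simpa [sub_eq_add_neg] using
      tendsto_const_nhds.add ((tendsto_inv_atTop_zero.comp hshift).const_mul 2)
  have hfrac : Tendsto (fun t : ℝ ↦ (t + 1) / (t - 1)) atTop (𝓝 1) := by
    refine hinv.congr' ?_
    filter_upwards [eventually_gt_atTop 1] with t ht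
    have : t - 1 ≠ 0 := by linarith
    field_simp
    ring
  simpa using (hfrac.comp hpow).const_mul ((r - 1) / (r + 1))

theorem integral_sq_sum_const_mul_of_pairwise_indepFun {Ω ι : Type*} [MeasurableSpace Ω]
    {μ : Measure Ω} [IsProbabilityMeasure μ] {η : ι → Ω → ℝ} {R : ℝ}
    (hindep : Pairwise fun i j ↦ IndepFun (η i) (η j) μ) (hmem : ∀ j, MemLp (η j) 2 μ)
    (hmean : ∀ j, ∫ ω, η j ω ∂μ = 0) (hvar : ∀ j, ∫ ω, η j ω ^ 2 ∂μ = R)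
    (s : Finset ι) (c : ι → ℝ) :
    ∫ ω, (∑ j ∈ s, c j * η j ω) ^ 2 ∂μ = R * ∑ j ∈ s, c j ^ 2 := by
  have hmem_mul : ∀ j, MemLp (fun ω ↦ c j * η j ω) 2 μ := fun j ↦ (hmem j).const_mul (c j)
  have hmean_sum : ∫ ω, ∑ j ∈ s, c j * η j ω ∂μ = 0 := by
    rw [integral_finsetSum s fun j _ ↦ (hmem_mul j).integrable one_le_two]
    simp [integral_const_mul, hmean]
  have hvar_eta : ∀ j, variance (η j) μ = R := fun j ↦ by
    rw [variance_of_integral_eq_zero (hmem j).aemeasurable (hmean j), hvar]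
  calc ∫ ω, (∑ j ∈ s, c j * η j ω) ^ 2 ∂μ
        = variance (fun ω ↦ ∑ j ∈ s, c j * η j ω) μ :=
        (variance_of_integral_eq_zero
          (memLp_finsetSum s fun j _ ↦ hmem_mul j).aemeasurable hmean_sum).symm
    _ = ∑ j ∈ s, variance (fun ω ↦ c j * η j ω) μ := by
        rw [← IndepFun.variance_sum (fun j _ ↦ hmem_mul j)
          fun i _ j _ hij ↦ (hindep hij).comp (measurable_const_mul _) (measurable_const_mul _)]
        simp only [Finset.sum_fn]
    _ = R * ∑ j ∈ s, c j ^ 2 := by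
        rw [mul_sum]
        exact sum_congr rfl fun j _ ↦ by rw [variance_const_mul, hvar_eta, mul_comm]

theorem stmt_3_general (α : ℝ) (hα : 0 < α)
    {Ω : Type*} [MeasureSpace Ω] [IsProbabilityMeasure (volume : Measure Ω)]
    (R : ℝ) (η : ℕ → Ω → ℝ)
    (hindep : iIndepFun η volume)
    (hmem : ∀ j, MemLp (η j) 2 volume)
    (hmean : ∀ j, ∫ ω, η j ω = 0)
    (hvar : ∀ j, ∫ ω, (η j ω) ^ 2 = R) :
    Tendsto (fun n => (∑ j ∈ Icc 1 n, ((1 + α) ^ (j - 1)) ^ 2) /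
        (∑ j ∈ Icc 1 n, (1 + α) ^ (j - 1)) ^ 2) atTop (nhds (α / (2 + α))) ∧
      Tendsto (fun n => ∫ ω, ((∑ j ∈ Icc 1 n, (1 + α) ^ (j - 1) * η j ω) /
          (∑ j ∈ Icc 1 n, (1 + α) ^ (j - 1))) ^ 2) atTop
        (nhds (α * R / (2 + α))) := by
  have hratio : Tendsto (fun n => (∑ j ∈ Icc 1 n, ((1 + α) ^ (j - 1)) ^ 2) /
      (∑ j ∈ Icc 1 n, (1 + α) ^ (j - 1)) ^ 2) atTop (𝓝 (α / (2 + α))) := by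
    simp only [sum_Icc_one_comp_sub_one fun k ↦ ((1 + α) ^ k) ^ 2,
      sum_Icc_one_comp_sub_one fun k ↦ (1 + α) ^ k]
    convert tendsto_geom_sum_sq_div_sq_geom_sum (by linarith : 1 < 1 + α) using 2
    ring
  refine ⟨hratio, ?_⟩
  have hsecond_moment := integral_sq_sum_const_mul_of_pairwise_indepFun
    (fun i j hij ↦ hindep.indepFun hij) hmem hmean hvar
  simp_rw [div_pow, integral_div, hsecond_moment]
  convert hratio.const_mul R using 2 <;> ring

/-- With geometric weights `w_j = (1+α)^{j-1}`, `(∑ w_j²)/(∑ w_j)² → α/(2+α)`;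
consequently for i.i.d.-type centered noise `η_j` of variance `R`, the exponentially
weighted average `μ_n = (∑ w_j η_j)/(∑ w_j)` satisfies `E[μ_n²] → α R/(2+α)`. -/
theorem stmt_3 (α : ℝ) (hα : 0 < α)
    {Ω : Type*} [MeasureSpace Ω] [IsProbabilityMeasure (volume : Measure Ω)]
    (R : ℝ) (hR : 0 < R) (η : ℕ → Ω → ℝ)
    (hindep : iIndepFun η volume)
    (hmem : ∀ j, MemLp (η j) 2 volume)
    (hmean : ∀ j, ∫ ω, η j ω = 0)
    (hvar : ∀ j, ∫ ω, (η j ω) ^ 2 = R) :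
    Tendsto (fun n => (∑ j ∈ Icc 1 n, ((1 + α) ^ (j - 1)) ^ 2) /
        (∑ j ∈ Icc 1 n, (1 + α) ^ (j - 1)) ^ 2) atTop (nhds (α / (2 + α))) ∧
      Tendsto (fun n => ∫ ω, ((∑ j ∈ Icc 1 n, (1 + α) ^ (j - 1) * η j ω) /
          (∑ j ∈ Icc 1 n, (1 + α) ^ (j - 1))) ^ 2) atTop
        (nhds (α * R / (2 + α))) :=
  stmt_3_general α hα R η hindep hmem hmean hvar
end

section
/- Fix α > 0 and a resampling period p ∈ ℕ, p ≥ 1, and set α_n = α if p divides n and α_n = 0 otherwise. Then for all n ≥ 0 and 0 ≤ q < p (with np+q ≥ 1) the solution of the covariance recursion admits the closed form Σ_{np+q} = (1+α)^n · R ( R + ( Σ_{j=1}^{np+q} (1+α)^{⌊(j-1)/p⌋} ) Σ₀ )⁻¹ Σ₀, where ⌊·⌋ denotes the integer floor. -/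
open Matrix Finset

/-!
Write `Σₘ = Pₘ • R (R + sₘ Σ₀)⁻¹ Σ₀`. Since
`R + Pₘ R (R + sₘ Σ₀)⁻¹ Σ₀ = R (R + sₘ Σ₀)⁻¹ (R + (sₘ + Pₘ) Σ₀)`, one step of the recursion
preserves this shape with `Pₘ₊₁ = (1 + αₘ₊₁) Pₘ` and `sₘ₊₁ = sₘ + Pₘ`. For periodic `αₙ`,
`Pₘ = (1 + α) ^ ⌊m / p⌋`, the exponent counting the multiples of `p` in `[1, m]`.
-/

namespace Matrix

variable {n K : Type*} [Fintype n] [DecidableEq n]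

/-- `R (R + s Σ₀)⁻¹ Σ₀ = (Σ₀⁻¹ + s R⁻¹)⁻¹`: the posterior covariance of a Gaussian prior `N(·, Σ₀)`
after observations with noise covariance `R` of total weight `s`. -/
noncomputable def posteriorCov [CommRing K] (R S0 : Matrix n n K) (s : K) : Matrix n n K :=
  R * (R + s • S0)⁻¹ * S0

section CommRing

variable [CommRing K] {R S0 : Matrix n n K}

theorem posteriorCov_zero (hR : IsUnit R.det) : posteriorCov R S0 0 = S0 := by
  rw [posteriorCov, zero_smul, add_zero, mul_nonsing_inv R hR, Matrix.one_mul]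

theorem riccati_smul_posteriorCov (hR : IsUnit R.det) {s : K} (hs : IsUnit (R + s • S0).det)
    (c : K) :
    R * (R + c • posteriorCov R S0 s)⁻¹ * (c • posteriorCov R S0 s)
      = c • posteriorCov R S0 (s + c) := by
  set A := R + s • S0
  have hsum : R + c • posteriorCov R S0 s = R * A⁻¹ * (R + (s + c) • S0) := by
    rw [add_smul, ← add_assoc, Matrix.mul_add, Matrix.mul_assoc R A⁻¹ A, nonsing_inv_mul A hs,
      Matrix.mul_one, Matrix.mul_smul, posteriorCov]
  rw [hsum, Matrix.mul_inv_rev, Matrix.mul_inv_rev, nonsing_inv_nonsing_inv A hs, Matrix.mul_smul,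
    posteriorCov, posteriorCov]
  simp only [Matrix.mul_assoc]
  rw [nonsing_inv_mul_cancel_left R _ hR, mul_nonsing_inv_cancel_left A _ hs]

end CommRing

theorem PosDef.isUnit_det_add_smul_s5 {R S : Matrix n n ℝ} (hR : R.PosDef) (hS : S.PosSemidef)
    {s : ℝ} (hs : 0 ≤ s) : IsUnit (R + s • S).det :=
  (hR.add_posSemidef (hS.smul hs)).det_pos.ne'.isUnit

theorem eq_prod_smul_posteriorCov {R S0 : Matrix n n ℝ} (hR : R.PosDef) (hS0 : S0.PosSemidef)
    {g : ℕ → ℝ} (hg : ∀ k, 0 ≤ g k) {S : ℕ → Matrix n n ℝ} (h0 : S 0 = S0)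
    (hrec : ∀ m, S (m + 1) = g (m + 1) • (R * (R + S m)⁻¹ * S m)) (m : ℕ) :
    S m = (∏ k ∈ Icc 1 m, g k) •
      posteriorCov R S0 (∑ j ∈ Icc 1 m, ∏ k ∈ Icc 1 (j - 1), g k) := by
  have hRu : IsUnit R.det := hR.det_pos.ne'.isUnit
  induction m with
  | zero => simp [posteriorCov_zero hRu, h0]
  | succ m ih =>
    have hs : 0 ≤ ∑ j ∈ Icc 1 m, ∏ k ∈ Icc 1 (j - 1), g k :=
      sum_nonneg fun j _ => prod_nonneg fun k _ => hg k
    rw [hrec, ih, riccati_smul_posteriorCov hRu (hR.isUnit_det_add_smul_s5 hS0 hs), smul_smul,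
      prod_Icc_succ_top (by omega), sum_Icc_succ_top (by omega), Nat.add_sub_cancel, mul_comm]

end Matrix

theorem Finset.prod_Icc_ite_dvd {M : Type*} [CommMonoid M] (p m : ℕ) (a : M) :
    ∏ k ∈ Icc 1 m, (if p ∣ k then a else 1) = a ^ (m / p) := by
  rw [prod_ite, prod_const, prod_const_one, mul_one, ← Nat.Ioc_filter_dvd_card_eq_div]
  rfl

theorem stmt_5_general {d : ℕ}
    (R S0 : Matrix (Fin d) (Fin d) ℝ) (hR : R.PosDef) (hS0pd : S0.PosDef)
    (α : ℝ) (hα : 0 < α) (p : ℕ)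
    (αseq : ℕ → ℝ) (hαseq : ∀ n, αseq n = if p ∣ n then α else 0)
    (S : ℕ → Matrix (Fin d) (Fin d) ℝ) (hS0 : S 0 = S0)
    (hrec : ∀ n, S (n + 1) = (1 + αseq (n + 1)) • (R * (R + S n)⁻¹ * S n)) :
    ∀ n q, q < p → 1 ≤ n * p + q →
      S (n * p + q) = ((1 + α) ^ n) •
        (R * (R + (∑ j ∈ Icc 1 (n * p + q), (1 + α) ^ ((j - 1) / p)) • S0)⁻¹ * S0) := by
  intro n q hq _
  have hgain : ∀ k, 1 + αseq k = if p ∣ k then 1 + α else 1 := fun k => by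
    rw [hαseq]; split_ifs <;> ring
  have hdiv : (n * p + q) / p = n := by
    rw [Nat.mul_comm, Nat.mul_add_div (Nat.zero_lt_of_lt hq), Nat.div_eq_of_lt hq, add_zero]
  have hclosed := Matrix.eq_prod_smul_posteriorCov (g := fun k => 1 + αseq k) hR
    hS0pd.posSemidef (fun k => by rw [hgain]; split_ifs <;> linarith) hS0 hrec (n * p + q)
  simp only [hgain, prod_Icc_ite_dvd, hdiv] at hclosed
  exact hclosed

/-- Closed form of the covariance recursion with periodic resampling
(`α_n = α` if `p ∣ n`, else `0`):
`Σ_{np+q} = (1+α)^n R (R + (∑_{j=1}^{np+q} (1+α)^{⌊(j-1)/p⌋}) Σ₀)⁻¹ Σ₀`. -/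
theorem stmt_5 {d : ℕ} (hd : 1 ≤ d)
    (R S0 : Matrix (Fin d) (Fin d) ℝ) (hR : R.PosDef) (hS0pd : S0.PosDef)
    (α : ℝ) (hα : 0 < α) (p : ℕ) (hp : 1 ≤ p)
    (αseq : ℕ → ℝ) (hαseq : ∀ n, αseq n = if p ∣ n then α else 0)
    (S : ℕ → Matrix (Fin d) (Fin d) ℝ) (hS0 : S 0 = S0)
    (hrec : ∀ n, S (n + 1) = (1 + αseq (n + 1)) • (R * (R + S n)⁻¹ * S n)) :
    ∀ n q, q < p → 1 ≤ n * p + q →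
      S (n * p + q) = ((1 + α) ^ n) •
        (R * (R + (∑ j ∈ Icc 1 (n * p + q), (1 + α) ^ ((j - 1) / p)) • S0)⁻¹ * S0) :=
  stmt_5_general R S0 hR hS0pd α hα p αseq hαseq S hS0 hrec
end

section
/- Fix ε ∈ (0, 1/2) and suppose α_n = n^{ε−1} for all n ≥ 1. Then the covariance recursion converges strictly slower than the optimal rate 1/n: there exists a constant c > 0 such that Σ_n ≽ c·n^{ε−1}·R for all n ≥ 1, where ≽ denotes the Loewner order (i.e., Σ_n − c n^{ε−1} R is positive semidefinite). -/
/-!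
In information form the recursion is affine: `Σₙ₊₁⁻¹ = (1 + αₙ₊₁)⁻¹ (Σₙ⁻¹ + R⁻¹)`. If
`Σₙ⁻¹ ≼ C n^(1-ε) R⁻¹` with `C ≥ 1`, then `Σₙ⁻¹ + R⁻¹ ≼ (C n^(1-ε) + 1) R⁻¹`, while multiplying
`C (n+1)^(1-ε)` by the discount `1 + (n+1)^(ε-1)` adds exactly `C ≥ 1`; so the bound propagates
by induction. Inverting, which reverses the Loewner order, gives `Σₙ ≽ C⁻¹ n^(ε-1) R`.
-/

open Matrix
open scoped MatrixOrder ComplexOrder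

namespace Matrix

variable {n : Type*} [Fintype n] [DecidableEq n]

section CommRing

variable {K : Type*} [CommRing K]

lemma mul_add_inv_mul_eq_inv_inv_add_inv {R S : Matrix n n K} (hR : IsUnit R) (hS : IsUnit S) :
    R * (R + S)⁻¹ * S = (S⁻¹ + R⁻¹)⁻¹ := by
  have hR' : IsUnit R.det := (isUnit_iff_isUnit_det R).mp hR
  have hS' : IsUnit S.det := (isUnit_iff_isUnit_det S).mp hS
  have h : S⁻¹ + R⁻¹ = S⁻¹ * (R + S) * R⁻¹ := by
    rw [Matrix.mul_add, nonsing_inv_mul _ hS', Matrix.add_mul, Matrix.one_mul,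
      mul_nonsing_inv_cancel_right _ _ hR']
  rw [h, mul_inv_rev, mul_inv_rev, nonsing_inv_nonsing_inv _ hR', nonsing_inv_nonsing_inv _ hS',
    Matrix.mul_assoc]

lemma inv_sub_inv_eq_inv_mul_mul_inv {A B : Matrix n n K} (hA : IsUnit A) (hB : IsUnit B) :
    A⁻¹ - B⁻¹ = B⁻¹ * ((B - A) + (B - A) * A⁻¹ * (B - A)) * B⁻¹ := by
  have hA' : IsUnit A.det := (isUnit_iff_isUnit_det A).mp hA
  have hB' : IsUnit B.det := (isUnit_iff_isUnit_det B).mp hB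
  have hmid : (B - A) + (B - A) * A⁻¹ * (B - A) = B * A⁻¹ * B - B := by
    simp only [Matrix.sub_mul, Matrix.mul_sub, Matrix.mul_assoc, mul_nonsing_inv _ hA',
      nonsing_inv_mul _ hA', Matrix.one_mul, Matrix.mul_one]
    abel
  rw [hmid]
  simp only [Matrix.mul_sub, Matrix.sub_mul, Matrix.mul_assoc,
    nonsing_inv_mul_cancel_left _ _ hB', mul_nonsing_inv _ hB', nonsing_inv_mul _ hB',
    Matrix.one_mul, Matrix.mul_one]

end CommRing

lemma inv_smul_inv {F : Type*} [Field F] {A : Matrix n n F} (hA : IsUnit A) {c : F}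
    (hc : c ≠ 0) :
    (c • A⁻¹)⁻¹ = c⁻¹ • A := by
  have hA' : IsUnit A.det := (isUnit_iff_isUnit_det A).mp hA
  refine inv_eq_left_inv ?_
  rw [Matrix.smul_mul, Matrix.mul_smul, smul_smul, inv_mul_cancel₀ hc, one_smul,
    mul_nonsing_inv _ hA']

section RCLike

variable {𝕜 : Type*} [RCLike 𝕜]

theorem PosDef.inv_le_inv_of_le {A B : Matrix n n 𝕜} (hA : A.PosDef) (hAB : A ≤ B) :
    B⁻¹ ≤ A⁻¹ := by
  have hB : B.PosDef := by simpa using hA.add_posSemidef hAB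
  have h := (hAB.add (hA.inv.posSemidef.conjTranspose_mul_mul_same (B - A))
    ).mul_mul_conjTranspose_same B⁻¹
  rwa [hAB.isHermitian.eq, hB.inv.isHermitian.eq,
    ← inv_sub_inv_eq_inv_mul_mul_inv hA.isUnit hB.isUnit] at h

lemma IsHermitian.exists_le_smul_one {A : Matrix n n 𝕜} (hA : A.IsHermitian) :
    ∃ K : ℝ, 0 ≤ K ∧ A ≤ K • (1 : Matrix n n 𝕜) := by
  refine ⟨∑ i, |hA.eigenvalues i|, by positivity, ?_⟩
  rw [← Algebra.algebraMap_eq_smul_one]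
  refine le_algebraMap_of_spectrum_le (fun x hx => ?_) hA.isSelfAdjoint
  obtain ⟨i, rfl⟩ := hA.spectrum_real_eq_range_eigenvalues ▸ hx
  exact (le_abs_self _).trans
    (Finset.single_le_sum (fun j _ => abs_nonneg (hA.eigenvalues j)) (Finset.mem_univ i))

lemma PosDef.exists_smul_one_le {B : Matrix n n 𝕜} (hB : B.PosDef) :
    ∃ c : ℝ, 0 < c ∧ c • (1 : Matrix n n 𝕜) ≤ B := by
  cases isEmpty_or_nonempty n
  · exact ⟨1, one_pos, le_of_eq (Subsingleton.elim _ _)⟩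
  simp_rw [← Algebra.algebraMap_eq_smul_one]
  exact (CFC.exists_pos_algebraMap_le_iff hB.isHermitian.isSelfAdjoint).2
    fun x hx => (isStrictlyPositive_iff_posDef.2 hB).spectrum_pos hx

lemma IsHermitian.exists_le_smul_of_posDef {A B : Matrix n n 𝕜} (hA : A.IsHermitian)
    (hB : B.PosDef) : ∃ t : ℝ, 0 ≤ t ∧ A ≤ t • B := by
  obtain ⟨K, hK, hAK⟩ := hA.exists_le_smul_one
  obtain ⟨c, hc, hcB⟩ := hB.exists_smul_one_le
  refine ⟨K / c, by positivity, hAK.trans ?_⟩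
  calc K • (1 : Matrix n n 𝕜) = (K / c) • c • (1 : Matrix n n 𝕜) := by
        rw [smul_smul, div_mul_cancel₀ _ hc.ne']
    _ ≤ (K / c) • B := smul_le_smul_of_nonneg_left hcB (by positivity)

end RCLike

end Matrix

lemma inv_one_add_rpow_mul_le {x p C : ℝ} (hx : 0 ≤ x) (hp : p ≤ 1) (hC : 1 ≤ C) :
    (1 + (x + 1) ^ (p - 1))⁻¹ * (C * x ^ (1 - p) + 1) ≤ C * (x + 1) ^ (1 - p) := by
  have hx1 : 0 < x + 1 := by linarith
  have hcancel : (x + 1) ^ (p - 1) * (x + 1) ^ (1 - p) = 1 := by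
    rw [← Real.rpow_add hx1, sub_add_sub_cancel', sub_self, Real.rpow_zero]
  have hmono : x ^ (1 - p) ≤ (x + 1) ^ (1 - p) :=
    Real.rpow_le_rpow hx (by linarith) (by linarith)
  rw [inv_mul_le_iff₀ (by positivity)]
  calc C * x ^ (1 - p) + 1 ≤ C * (x + 1) ^ (1 - p) + C := by gcongr
    _ = (1 + (x + 1) ^ (p - 1)) * (C * (x + 1) ^ (1 - p)) := by linear_combination (-C) * hcancel

section OrderedModule

variable {M : Type*} [AddCommGroup M] [PartialOrder M] [IsOrderedAddMonoid M] [Module ℝ M]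
  [PosSMulMono ℝ M]

theorem le_mul_rpow_smul_of_succ_eq_smul_add {P : ℕ → M} {Q : M} {p C : ℝ} (hQ : 0 ≤ Q)
    (hp : p ≤ 1) (hC : 1 ≤ C) (hP₀ : 0 ≤ P 0) (hP₀C : P 0 ≤ (C - 1) • Q)
    (hP : ∀ n, P (n + 1) = (1 + ((n + 1 : ℕ) : ℝ) ^ (p - 1))⁻¹ • (P n + Q)) :
    ∀ n ≥ 1, P n ≤ (C * (n : ℝ) ^ (1 - p)) • Q := by
  intro n hn
  induction n, hn using Nat.le_induction with
  | base =>
    calc P 1 ≤ P 0 + Q := by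
          rw [hP 0]
          exact smul_le_of_le_one_left (add_nonneg hP₀ hQ)
            (inv_le_one_of_one_le₀ (le_add_of_nonneg_right (by positivity)))
      _ ≤ (C - 1) • Q + Q := by gcongr
      _ = (C * ((1 : ℕ) : ℝ) ^ (1 - p)) • Q := by simp [sub_smul]
  | succ n _ ih =>
    calc P (n + 1)
        ≤ (1 + ((n + 1 : ℕ) : ℝ) ^ (p - 1))⁻¹ • ((C * (n : ℝ) ^ (1 - p)) • Q + Q) := by
          rw [hP n]; exact smul_le_smul_of_nonneg_left (by gcongr) (by positivity)
      _ = ((1 + ((n + 1 : ℕ) : ℝ) ^ (p - 1))⁻¹ * (C * (n : ℝ) ^ (1 - p) + 1)) • Q := by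
          module
      _ ≤ (C * ((n + 1 : ℕ) : ℝ) ^ (1 - p)) • Q := by
          refine smul_le_smul_of_nonneg_right ?_ hQ
          push_cast
          exact inv_one_add_rpow_mul_le n.cast_nonneg hp hC

end OrderedModule

theorem stmt_8_general {d : ℕ}
    (R S0 : Matrix (Fin d) (Fin d) ℝ) (hR : R.PosDef) (hS0pd : S0.PosDef)
    (ε : ℝ) (hε1 : ε < 1 / 2)
    (α : ℕ → ℝ)
    (hαdef : ∀ n : ℕ, 1 ≤ n → α n = (n : ℝ) ^ (ε - 1))
    (S : ℕ → Matrix (Fin d) (Fin d) ℝ) (hS0 : S 0 = S0)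
    (hrec : ∀ n, S (n + 1) = (1 + α (n + 1)) • (R * (R + S n)⁻¹ * S n)) :
    ∃ c > 0, ∀ n : ℕ, 1 ≤ n → (S n - (c * (n : ℝ) ^ (ε - 1)) • R).PosSemidef := by
  have hα : ∀ n, α (n + 1) = ((n + 1 : ℕ) : ℝ) ^ (ε - 1) := fun n => hαdef (n + 1) n.succ_pos
  have hα_pos : ∀ n : ℕ, 0 < 1 + ((n + 1 : ℕ) : ℝ) ^ (ε - 1) := fun n => by positivity
  have hpd : ∀ n, (S n).PosDef := by
    intro n
    induction n with
    | zero => exact hS0 ▸ hS0pd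
    | succ n ih =>
      rw [hrec, mul_add_inv_mul_eq_inv_inv_add_inv hR.isUnit ih.isUnit, hα]
      exact (ih.inv.add hR.inv).inv.smul (hα_pos n)
  have hinfo : ∀ n, (S (n + 1))⁻¹ = (1 + ((n + 1 : ℕ) : ℝ) ^ (ε - 1))⁻¹ • ((S n)⁻¹ + R⁻¹) := by
    intro n
    rw [hrec, mul_add_inv_mul_eq_inv_inv_add_inv hR.isUnit (hpd n).isUnit, hα,
      inv_smul_inv ((hpd n).inv.add hR.inv).isUnit (hα_pos n).ne']
  obtain ⟨t, ht, hS0t⟩ := (hpd 0).inv.isHermitian.exists_le_smul_of_posDef hR.inv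
  have hbound := le_mul_rpow_smul_of_succ_eq_smul_add (P := fun n => (S n)⁻¹) (C := t + 1)
    hR.inv.posSemidef.nonneg (by linarith) (by linarith) (hpd 0).inv.posSemidef.nonneg
    (by simpa using hS0t) hinfo
  refine ⟨(t + 1)⁻¹, by positivity, fun n hn => ?_⟩
  have hk : 0 < (t + 1) * (n : ℝ) ^ (1 - ε) := by positivity
  have h := (hpd n).inv.inv_le_inv_of_le (hbound n hn)
  rw [inv_smul_inv hR.isUnit hk.ne', nonsing_inv_nonsing_inv _ (hpd n).det_pos.ne'.isUnit,
    mul_inv, ← Real.rpow_neg n.cast_nonneg, neg_sub] at h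
  exact h

/-- Sub-optimal rate: if `α_n = n^{ε-1}` with `ε ∈ (0,1/2)`, then the RPF covariance
remains bounded below as `Σ_n ≽ c n^{ε-1} R` (Loewner order) for some `c > 0`. -/
theorem stmt_8 {d : ℕ} (hd : 1 ≤ d)
    (R S0 : Matrix (Fin d) (Fin d) ℝ) (hR : R.PosDef) (hS0pd : S0.PosDef)
    (ε : ℝ) (hε0 : 0 < ε) (hε1 : ε < 1 / 2)
    (α : ℕ → ℝ) (hα0 : α 0 = 0)
    (hαdef : ∀ n : ℕ, 1 ≤ n → α n = (n : ℝ) ^ (ε - 1))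
    (S : ℕ → Matrix (Fin d) (Fin d) ℝ) (hS0 : S 0 = S0)
    (hrec : ∀ n, S (n + 1) = (1 + α (n + 1)) • (R * (R + S n)⁻¹ * S n)) :
    ∃ c > 0, ∀ n : ℕ, 1 ≤ n → (S n - (c * (n : ℝ) ^ (ε - 1)) • R).PosSemidef :=
  stmt_8_general R S0 hR hS0pd ε hε1 α hαdef S hS0 hrec
end

section
/- Suppose lim_{n→∞} α_n = 0. Then Σ_n → 0 (entrywise, equivalently in any matrix norm) as n → ∞. In other words, any bandwidth modulation tending to zero forces the regularized particle filter covariance to vanish asymptotically. -/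
/-!
With `Tₙ = Σₙ⁻¹`, the parallel-sum identity `R (R + Σ)⁻¹ Σ = (Σ⁻¹ + R⁻¹)⁻¹` turns the recursion
into the affine one `Tₙ₊₁ = (1 + αₙ₊₁)⁻¹ (Tₙ + R⁻¹)`. Hence `wₙ R⁻¹ ≤ Tₙ` in the Loewner order,
where `wₙ₊₁ = (wₙ + 1) / (1 + αₙ₊₁)`, and `wₙ → ∞` because `αₙ → 0`. Inversion reverses the
Loewner order, so `0 ≤ Σₙ ≤ wₙ⁻¹ R → 0`.
-/

open Matrix Finset Filter
open scoped MatrixOrder Topology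

theorem eventually_le_of_le_or_add_le {u : ℕ → ℝ} {M δ : ℝ} (hδ : 0 < δ) {N : ℕ}
    (hstep : ∀ n ≥ N, M ≤ u (n + 1) ∨ u n + δ ≤ u (n + 1)) : ∀ᶠ n in atTop, M ≤ u n := by
  have hreach (k : ℕ) : M ≤ u (N + k) ∨ u N + k * δ ≤ u (N + k) := by
    induction k with
    | zero => simp
    | succ k ih =>
      rw [← add_assoc]
      rcases hstep (N + k) (Nat.le_add_right N k) with h | h
      · exact .inl h
      · rcases ih with ih | ih
        · exact .inl (by linarith)
        · exact .inr (by push_cast; linarith)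
  obtain ⟨K, hK⟩ := exists_nat_ge ((M - u N) / δ)
  rw [div_le_iff₀ hδ] at hK
  refine eventually_atTop.2 ⟨N + K, fun n hn => ?_⟩
  obtain ⟨k, rfl⟩ := Nat.exists_eq_add_of_le (le_of_add_le_left hn)
  have hKk : (K : ℝ) ≤ k := by exact_mod_cast Nat.le_of_add_le_add_left hn
  rcases hreach k with h | h
  · exact h
  · nlinarith

theorem tendsto_atTop_of_add_le_one_add_mul {u a : ℕ → ℝ} {r : ℝ} (hr : 0 < r)
    (hu : ∀ n, 0 ≤ u n) (ha : Tendsto a atTop (𝓝 0))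
    (hrec : ∀ n, u n + r ≤ (1 + a n) * u (n + 1)) : Tendsto u atTop atTop := by
  refine tendsto_atTop.2 fun M => ?_
  wlog hM : 0 < M generalizing M
  · filter_upwards [this 1 one_pos] with n hn
    linarith
  -- once `a n ≤ r / (2 M)`, the sequence either reaches `M` or grows by `r / 2`
  obtain ⟨N, hN⟩ := eventually_atTop.1 (ha.eventually_le_const (div_pos hr (mul_pos two_pos hM)))
  refine eventually_le_of_le_or_add_le (half_pos hr) (N := N) fun n hn => ?_
  refine (le_or_gt M (u (n + 1))).imp id fun hlt => ?_
  have han := hN n hn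
  rw [le_div_iff₀ (by positivity)] at han
  nlinarith [hrec n, hu (n + 1)]

/-- The coefficient `wₙ` of `R⁻¹` in `Σₙ⁻¹`: with `α ≡ 0` it counts the observations, in general
each observation is discounted by the later bandwidth inflations. -/
noncomputable def discountedCount (α : ℕ → ℝ) : ℕ → ℝ
  | 0 => 0
  | n + 1 => (discountedCount α n + 1) / (1 + α (n + 1))

theorem discountedCount_nonneg {α : ℕ → ℝ} (hα : ∀ n, 0 ≤ α n) (n : ℕ) :
    0 ≤ discountedCount α n := by
  induction n with
  | zero => exact le_rfl
  | succ n ih => exact div_nonneg (by linarith) (by linarith [hα (n + 1)])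

theorem tendsto_discountedCount {α : ℕ → ℝ} (hα : ∀ n, 0 ≤ α n)
    (hlim : Tendsto α atTop (𝓝 0)) : Tendsto (discountedCount α) atTop atTop := by
  refine tendsto_atTop_of_add_le_one_add_mul one_pos (discountedCount_nonneg hα)
    (hlim.comp (tendsto_add_atTop_nat 1)) fun n => le_of_eq ?_
  have : 1 + α (n + 1) ≠ 0 := by linarith [hα (n + 1)]
  simp only [discountedCount, Function.comp_apply]
  field_simp

namespace Matrix

variable {ι : Type*} [Fintype ι] [DecidableEq ι]

theorem mul_inv_add_mul_eq_inv_inv_add_inv {K : Type*} [Field K] {A B : Matrix ι ι K}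
    (hA : IsUnit A.det) (hB : IsUnit B.det) : A * (A + B)⁻¹ * B = (B⁻¹ + A⁻¹)⁻¹ := by
  have : B⁻¹ + A⁻¹ = B⁻¹ * (A + B) * A⁻¹ := by
    rw [Matrix.mul_add, Matrix.add_mul, nonsing_inv_mul _ hB, Matrix.one_mul,
      Matrix.mul_nonsing_inv_cancel_right _ _ hA, add_comm]
  rw [this, mul_inv_rev, mul_inv_rev, nonsing_inv_nonsing_inv _ hA,
    nonsing_inv_nonsing_inv _ hB, Matrix.mul_assoc]

theorem inv_smul₀ {K : Type*} [Field K] {A : Matrix ι ι K} (hA : IsUnit A.det) {c : K}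
    (hc : c ≠ 0) : (c • A)⁻¹ = c⁻¹ • A⁻¹ :=
  inv_eq_left_inv (by rw [smul_mul_smul_comm, inv_mul_cancel₀ hc, nonsing_inv_mul _ hA, one_smul])

theorem PosSemidef.abs_apply_le {A : Matrix ι ι ℝ} (hA : A.PosSemidef) (i j : ι) :
    |A i j| ≤ (A i i + A j j) / 2 := by
  have hsymm : A j i = A i j := hA.isHermitian.apply i j
  have hplus := hA.dotProduct_mulVec_nonneg (Pi.single i 1 + Pi.single j 1)
  have hminus := hA.dotProduct_mulVec_nonneg (Pi.single i 1 - Pi.single j 1)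
  simp only [star_trivial, mulVec_add, mulVec_sub, dotProduct_add, dotProduct_sub, add_dotProduct,
    sub_dotProduct, mulVec_single_one, single_one_dotProduct, col_apply, hsymm] at hplus hminus
  rw [abs_le]
  constructor <;> linarith

theorem tendsto_nhds_zero_of_nonneg_of_le {α : Type*} {l : Filter α} {A B : α → Matrix ι ι ℝ}
    (hB : Tendsto B l (𝓝 0)) (hA₀ : ∀ᶠ a in l, 0 ≤ A a) (hAB : ∀ᶠ a in l, A a ≤ B a) :
    Tendsto A l (𝓝 0) := by
  have hdiag (i : ι) : Tendsto (fun a => B a i i) l (𝓝 0) :=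
    ((continuous_apply_apply i i).tendsto 0).comp hB
  refine tendsto_pi_nhds.2 fun i => tendsto_pi_nhds.2 fun j => ?_
  refine squeeze_zero_norm' ?_ (by simpa using ((hdiag i).add (hdiag j)).div_const 2)
  filter_upwards [hA₀, hAB] with a h₀ h
  have hi := (Matrix.le_iff.mp h).diag_nonneg (i := i)
  have hj := (Matrix.le_iff.mp h).diag_nonneg (i := j)
  rw [sub_apply, sub_nonneg] at hi hj
  rw [Real.norm_eq_abs]
  linarith [h₀.posSemidef.abs_apply_le i j]

theorem PosDef.inv_anti {A B : Matrix ι ι ℝ} (hA : A.PosDef) (hAB : A ≤ B) : B⁻¹ ≤ A⁻¹ := by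
  have hB : B.PosDef := by simpa using hA.add_posSemidef (Matrix.le_iff.mp hAB)
  refine PosSemidef.of_dotProduct_mulVec_nonneg (hA.inv.isHermitian.sub hB.inv.isHermitian)
    fun x => ?_
  -- with `y = B⁻¹ x`, `z = A⁻¹ x`: `x⬝B⁻¹x = y⬝By ≥ y⬝Ay` and `(z - y)⬝A(z - y) ≥ 0`
  set y := B⁻¹ *ᵥ x
  set z := A⁻¹ *ᵥ x
  have hBy : B *ᵥ y = x := by simp [y, mulVec_mulVec, mul_nonsing_inv _ hB.det_pos.ne'.isUnit]
  have hAz : A *ᵥ z = x := by simp [z, mulVec_mulVec, mul_nonsing_inv _ hA.det_pos.ne'.isUnit]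
  have hsymm : y ⬝ᵥ (A *ᵥ z) = z ⬝ᵥ (A *ᵥ y) := by
    rw [dotProduct_mulVec, ← mulVec_transpose, ← conjTranspose_eq_transpose_of_trivial,
      hA.isHermitian.eq, dotProduct_comm]
  have hgap := (Matrix.le_iff.mp hAB).dotProduct_mulVec_nonneg y
  have hsq := hA.posSemidef.dotProduct_mulVec_nonneg (z - y)
  simp only [star_trivial, sub_mulVec, dotProduct_sub, sub_dotProduct, mulVec_sub] at hgap hsq ⊢
  rw [← hsymm, hAz, dotProduct_comm z x, dotProduct_comm y x] at hsq
  rw [hBy, dotProduct_comm y x] at hgap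
  linarith

variable {R A : Matrix ι ι ℝ}

theorem PosDef.smul_mul_inv_add_mul (hR : R.PosDef) (hA : A.PosDef) {c : ℝ} (hc : 0 < c) :
    (c • (R * (R + A)⁻¹ * A)).PosDef := by
  rw [mul_inv_add_mul_eq_inv_inv_add_inv hR.det_pos.ne'.isUnit hA.det_pos.ne'.isUnit]
  exact (hA.inv.add hR.inv).inv.smul hc

theorem PosDef.inv_smul_mul_inv_add_mul (hR : R.PosDef) (hA : A.PosDef) {c : ℝ} (hc : c ≠ 0) :
    (c • (R * (R + A)⁻¹ * A))⁻¹ = c⁻¹ • (A⁻¹ + R⁻¹) := by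
  have hsum := (hA.inv.add hR.inv).det_pos.ne'.isUnit
  rw [mul_inv_add_mul_eq_inv_inv_add_inv hR.det_pos.ne'.isUnit hA.det_pos.ne'.isUnit,
    inv_smul₀ (isUnit_nonsing_inv_det _ hsum) hc, nonsing_inv_nonsing_inv _ hsum]

end Matrix

theorem stmt_11_general {d : ℕ}
    (R S0 : Matrix (Fin d) (Fin d) ℝ) (hR : R.PosDef) (hS0pd : S0.PosDef)
    (α : ℕ → ℝ) (hαnn : ∀ n, 0 ≤ α n)
    (hαlim : Tendsto α atTop (nhds 0))
    (S : ℕ → Matrix (Fin d) (Fin d) ℝ) (hS0 : S 0 = S0)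
    (hrec : ∀ n, S (n + 1) = (1 + α (n + 1)) • (R * (R + S n)⁻¹ * S n)) :
    Tendsto S atTop (nhds (0 : Matrix (Fin d) (Fin d) ℝ)) := by
  have hc (n : ℕ) : 0 < 1 + α n := by linarith [hαnn n]
  have hpd (n : ℕ) : (S n).PosDef := by
    induction n with
    | zero => exact hS0 ▸ hS0pd
    | succ n ih => exact hrec n ▸ hR.smul_mul_inv_add_mul ih (hc _)
  have hlower (n : ℕ) : discountedCount α n • R⁻¹ ≤ (S n)⁻¹ := by
    induction n with
    | zero => simpa [discountedCount] using (hpd 0).inv.posSemidef.nonneg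
    | succ n ih =>
      rw [hrec, hR.inv_smul_mul_inv_add_mul (hpd n) (hc _).ne', discountedCount, div_eq_inv_mul,
        mul_smul, add_smul, one_smul]
      exact smul_le_smul_of_nonneg_left (add_le_add_left ih _) (inv_pos.2 (hc _)).le
  have hw := tendsto_discountedCount hαnn hαlim
  have hupper : ∀ᶠ n in atTop, S n ≤ (discountedCount α n)⁻¹ • R := by
    filter_upwards [hw.eventually_gt_atTop 0] with n hn
    simpa [inv_smul₀ (isUnit_nonsing_inv_det _ hR.det_pos.ne'.isUnit) hn.ne',
      nonsing_inv_nonsing_inv _ (hpd n).det_pos.ne'.isUnit,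
      nonsing_inv_nonsing_inv _ hR.det_pos.ne'.isUnit] using (hR.inv.smul hn).inv_anti (hlower n)
  refine tendsto_nhds_zero_of_nonneg_of_le ?_ (.of_forall fun n => (hpd n).posSemidef.nonneg) hupper
  simpa using (tendsto_inv_atTop_zero.comp hw).smul_const R

/-- Any bandwidth modulation tending to zero forces the RPF covariance to vanish:
if `α_n → 0` then `Σ_n → 0` (entrywise, i.e. for the product topology on matrices). -/
theorem stmt_11 {d : ℕ} (hd : 1 ≤ d)
    (R S0 : Matrix (Fin d) (Fin d) ℝ) (hR : R.PosDef) (hS0pd : S0.PosDef)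
    (α : ℕ → ℝ) (hα0 : α 0 = 0) (hαnn : ∀ n, 0 ≤ α n)
    (hαlim : Tendsto α atTop (nhds 0))
    (S : ℕ → Matrix (Fin d) (Fin d) ℝ) (hS0 : S 0 = S0)
    (hrec : ∀ n, S (n + 1) = (1 + α (n + 1)) • (R * (R + S n)⁻¹ * S n)) :
    Tendsto S atTop (nhds (0 : Matrix (Fin d) (Fin d) ℝ)) :=
  stmt_11_general R S0 hR hS0pd α hαnn hαlim S hS0 hrec
end

section
/- Let μ₀ ∈ ℝ, Σ₀ > 0, R > 0, n ≥ 1 an integer, and y₁,…,y_n ∈ ℝ. Define I₁ = ∫_ℝ (2πΣ₀)^{−1/2} e^{−(x−μ₀)²/(2Σ₀)} ∏_{j=1}^n (2πR)^{−1/2} e^{−(y_j−x)²/(2R)} dx and I₂ = ∫_ℝ (2πΣ₀)^{−1/2} e^{−(x−μ₀)²/(2Σ₀)} ∏_{j=1}^n (2πR)^{−1} e^{−(y_j−x)²/R} dx. Then, with γ = R/(nΣ₀) and ȳ = (1/n)Σ_{j=1}^n y_j, one has I₁²/I₂ = ( √(γ(2+γ)) / (1+γ) ) · exp( −(μ₀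 − ȳ)² / ( Σ₀ (1+γ)(2+γ) ) ). This is the N→∞ limit of ESS_n/N for the one-dimensional stationary hidden Markov model. -/
open Finset Real MeasureTheory

/-! The Gaussian prior times `n` Gaussian likelihoods is an unnormalized Gaussian in `x`, with
precision `1/Σ₀ + n/R` for `I₁` and `1/Σ₀ + 2n/R` for `I₂` (squaring a likelihood halves its
variance), so both integrals are explicit after completing the square. The data enter only
through `n`, `∑ yⱼ` and `∑ yⱼ²`, and the `∑ yⱼ²` terms cancel in `I₁² / I₂`. -/

theorem integral_exp_neg_quadratic {a : ℝ} (ha : 0 < a) (b c : ℝ) :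
    ∫ x : ℝ, exp (-(a * x ^ 2 - 2 * b * x + c)) = √(π / a) * exp (b ^ 2 / a - c) := by
  have hsq : ∀ x : ℝ, -(a * x ^ 2 - 2 * b * x + c) = -a * (x - b / a) ^ 2 + (b ^ 2 / a - c) := by
    intro x; field_simp; ring
  simp_rw [hsq, exp_add, integral_mul_const, integral_sub_right_eq_self (fun x ↦ exp (-a * x ^ 2)),
    integral_gaussian]

theorem sum_sub_sq {ι : Type*} (t : Finset ι) (y : ι → ℝ) (x : ℝ) :
    ∑ j ∈ t, (y j - x) ^ 2 = #t * x ^ 2 - 2 * (∑ j ∈ t, y j) * x + ∑ j ∈ t, y j ^ 2 := by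
  simp only [sub_sq, sum_add_distrib, sum_sub_distrib, sum_const, nsmul_eq_mul, ← sum_mul,
    ← mul_sum]
  ring

theorem prod_const_mul_exp {ι : Type*} (t : Finset ι) (c : ℝ) (f : ι → ℝ) :
    ∏ j ∈ t, c * exp (f j) = c ^ #t * exp (∑ j ∈ t, f j) := by
  rw [prod_mul_distrib, prod_const, exp_sum]

theorem integral_exp_neg_sq_div_sub_sum_sq_div {ι : Type*} (t : Finset ι) (y : ι → ℝ)
    {μ S d : ℝ} (hS : 0 < S) (hd : 0 < d) :
    ∫ x : ℝ, exp (-(x - μ) ^ 2 / (2 * S) - (∑ j ∈ t, (y j - x) ^ 2) / d) =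
      √(π / (1 / (2 * S) + #t / d)) *
        exp ((μ / (2 * S) + (∑ j ∈ t, y j) / d) ^ 2 / (1 / (2 * S) + #t / d) -
          (μ ^ 2 / (2 * S) + (∑ j ∈ t, y j ^ 2) / d)) := by
  rw [← integral_exp_neg_quadratic (by positivity)]
  congr 1 with x
  rw [sum_sub_sq]
  congr 1
  field_simp
  ring

theorem integral_gaussian_prior_mul_prod_likelihood {ι : Type*} (t : Finset ι) (y : ι → ℝ)
    {μ S d : ℝ} (hS : 0 < S) (hd : 0 < d) (c₀ c : ℝ) :
    ∫ x : ℝ, c₀ * exp (-(x - μ) ^ 2 / (2 * S)) * ∏ j ∈ t, c * exp (-(y j - x) ^ 2 / d) =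
      c₀ * c ^ #t * (√(π / (1 / (2 * S) + #t / d)) *
        exp ((μ / (2 * S) + (∑ j ∈ t, y j) / d) ^ 2 / (1 / (2 * S) + #t / d) -
          (μ ^ 2 / (2 * S) + (∑ j ∈ t, y j ^ 2) / d))) := by
  rw [← integral_exp_neg_sq_div_sub_sum_sq_div t y hS hd, ← integral_const_mul]
  congr 1 with x
  rw [prod_const_mul_exp, ← sum_div, sum_neg_distrib, neg_div d, exp_neg, exp_sub,
    div_eq_mul_inv (exp _)]
  ring

theorem ess_limit_prefactor {S R N : ℝ} (hS : 0 < S) (hR : 0 < R) (hN : 0 < N) :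
    (√(2 * π * S))⁻¹ * (π / (1 / (2 * S) + N / (2 * R))) / √(π / (1 / (2 * S) + N / R)) =
      √(R / (N * S) * (2 + R / (N * S))) / (1 + R / (N * S)) := by
  rw [← sqrt_inv, ← sqrt_sq (by positivity : 0 ≤ π / (1 / (2 * S) + N / (2 * R))),
    ← sqrt_mul (by positivity), ← sqrt_div' _ (by positivity : 0 ≤ π / (1 / (2 * S) + N / R)),
    ← sqrt_sq (by positivity : 0 ≤ 1 + R / (N * S)), ← sqrt_div' _ (by positivity)]
  congr 1
  field_simp
  ring

theorem ess_limit_exponent {μ S R N : ℝ} (hS : 0 < S) (hR : 0 < R) (hN : 0 < N) (s q : ℝ) :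
    exp ((μ / (2 * S) + s / (2 * R)) ^ 2 / (1 / (2 * S) + N / (2 * R)) -
        (μ ^ 2 / (2 * S) + q / (2 * R))) ^ 2 /
      exp ((μ / (2 * S) + s / R) ^ 2 / (1 / (2 * S) + N / R) - (μ ^ 2 / (2 * S) + q / R)) =
    exp (-(μ - s / N) ^ 2 / (S * (1 + R / (N * S)) * (2 + R / (N * S)))) := by
  rw [← exp_nat_mul, ← exp_sub]
  congr 1
  field_simp
  ring

/-- Large-`N` limit of `ESS_n/N` for the one-dimensional stationary HMM: with
`γ = R/(nΣ₀)` and `ȳ = (1/n)∑ y_j`,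
`I₁²/I₂ = (√(γ(2+γ))/(1+γ)) exp(−(μ₀−ȳ)²/(Σ₀(1+γ)(2+γ)))`. -/
theorem stmt_14 (μ0 S0 R : ℝ) (hS0 : 0 < S0) (hR : 0 < R) (n : ℕ) (hn : 1 ≤ n)
    (y : ℕ → ℝ) :
    (∫ x : ℝ, (Real.sqrt (2 * Real.pi * S0))⁻¹ * Real.exp (-(x - μ0) ^ 2 / (2 * S0)) *
          ∏ j ∈ Icc 1 n,
            (Real.sqrt (2 * Real.pi * R))⁻¹ * Real.exp (-(y j - x) ^ 2 / (2 * R))) ^ 2 /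
      (∫ x : ℝ, (Real.sqrt (2 * Real.pi * S0))⁻¹ * Real.exp (-(x - μ0) ^ 2 / (2 * S0)) *
          ∏ j ∈ Icc 1 n,
            (2 * Real.pi * R)⁻¹ * Real.exp (-(y j - x) ^ 2 / R)) =
    (Real.sqrt ((R / (n * S0)) * (2 + R / (n * S0))) / (1 + R / (n * S0))) *
      Real.exp (-(μ0 - (∑ j ∈ Icc 1 n, y j) / n) ^ 2 /
        (S0 * (1 + R / (n * S0)) * (2 + R / (n * S0)))) := by
  have hn0 : (0 : ℝ) < n := by exact_mod_cast hn
  rw [integral_gaussian_prior_mul_prod_likelihood _ _ hS0 (by positivity : 0 < 2 * R),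
    integral_gaussian_prior_mul_prod_likelihood _ _ hS0 hR, Nat.card_Icc, Nat.add_sub_cancel,
    show (2 * π * R)⁻¹ = (√(2 * π * R))⁻¹ ^ 2 by rw [inv_pow, sq_sqrt (by positivity)],
    ← ess_limit_prefactor hS0 hR hn0,
    ← ess_limit_exponent hS0 hR hn0 _ (∑ j ∈ Icc 1 n, y j ^ 2), mul_pow, mul_pow, mul_pow,
    sq_sqrt (by positivity)]
  field_simp
  ring
end

section
/- Let n, m be positive reals and E ∈ (0,1). Then √(n(2m+n))/(m+n) < E if and only if m/n > β, where β = √(1−E²) / (1 − √(1−E²)). Consequently, in the asymptotic regime where the effective sample size after resampling at time n satisfies ESS_{n+m}/N = √(n(2m+n))/(m+n), the ESS falls below the threshold E exactly when the elapsed time m exceeds β·n, so consecutive resampling times grow geometrically with ratio 1+β. -/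
open Real

/-- ESS threshold criterion: for positive reals `n, m` and `E ∈ (0,1)`,
`√(n(2m+n))/(m+n) < E ↔ m/n > β` with `β = √(1−E²)/(1−√(1−E²))`. -/
theorem stmt_15 (n m E : ℝ) (hn : 0 < n) (hm : 0 < m) (hE0 : 0 < E) (hE1 : E < 1) :
    Real.sqrt (n * (2 * m + n)) / (m + n) < E ↔
      m / n > Real.sqrt (1 - E ^ 2) / (1 - Real.sqrt (1 - E ^ 2)) := by
  set s := Real.sqrt (1 - E ^ 2) with hs
  have h1 : 0 < 1 - E ^ 2 := by nlinarith
  have hs0 : 0 < s := Real.sqrt_pos.mpr h1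
  have hs2 : s ^ 2 = 1 - E ^ 2 := Real.sq_sqrt h1.le
  have hs1 : s < 1 := by nlinarith [sq_nonneg (s - 1)]
  rw [div_lt_iff₀ (by linarith : (0:ℝ) < m + n),
    Real.sqrt_lt' (by positivity : 0 < E * (m + n)), gt_iff_lt,
    div_lt_div_iff₀ (by linarith : (0:ℝ) < 1 - s) hn]
  have key : (E * (m + n)) ^ 2 = (m + n) ^ 2 - (s * (m + n)) ^ 2 := by
    linear_combination (m + n) ^ 2 * hs2
  have hpos : 0 < s * (m + n) + m := by positivity
  constructor
  · intro h
    rw [key] at h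
    nlinarith [hpos, h]
  · intro h
    rw [key]
    nlinarith [hpos, h]
end

section
/- Consider the scalar Kalman covariance recursion with transition coefficient a > 0, no process noise and unit measurement: Σ_n = a² Σ_{n-1} R / (R + a² Σ_{n-1}), with Σ₀ > 0 and R > 0. Then: (i) if 0 < a < 1, the covariance decays exponentially fast, namely Σ_n ≤ a^{2n} Σ₀ for all n ≥ 0; (ii) if a > 1, the covariance converges to a positive limit: lim_{n→∞} Σ_n = (1 − a^{−2})·R, so Σ_n remains asymptotically bounded away from 0. -/
open Filter

/-- Scalar Kalman covariance recursion `Σ_n = a² Σ_{n-1} R/(R + a² Σ_{n-1})` with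
transition coefficient `a > 0`: (i) if `a < 1` the covariance decays exponentially,
`Σ_n ≤ a^{2n} Σ₀`; (ii) if `a > 1` it converges to the positive limit `(1−a^{-2}) R`. -/
theorem stmt_19 (a R Sig0 : ℝ) (ha : 0 < a) (hR : 0 < R) (hSig0 : 0 < Sig0)
    (S : ℕ → ℝ) (hS0 : S 0 = Sig0)
    (hrec : ∀ n, S (n + 1) = a ^ 2 * S n * R / (R + a ^ 2 * S n)) :
    (a < 1 → ∀ n, S n ≤ a ^ (2 * n) * Sig0) ∧
      (1 < a → Tendsto S atTop (nhds ((1 - (a ^ 2)⁻¹) * R))) := by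
  have ha2 : (0:ℝ) < a ^ 2 := by positivity
  have hpos : ∀ n, 0 < S n := by
    intro n
    induction n with
    | zero => simpa [hS0] using hSig0
    | succ n ih =>
      rw [hrec]
      have hden : 0 < R + a ^ 2 * S n := by positivity
      positivity
  constructor
  · intro ha1 n
    induction n with
    | zero => simp [hS0]
    | succ n ih =>
      have hden : 0 < R + a ^ 2 * S n := by nlinarith [hpos n]
      have h1 : S (n + 1) ≤ a ^ 2 * S n := by
        rw [hrec]
        rw [div_le_iff₀ hden]
        have : R ≤ R + a ^ 2 * S n := by nlinarith [hpos n]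
        nlinarith [hpos n]
      calc S (n + 1) ≤ a ^ 2 * S n := h1
        _ ≤ a ^ 2 * (a ^ (2 * n) * Sig0) := by nlinarith
        _ = a ^ (2 * (n + 1)) * Sig0 := by ring
  · intro ha1
    set c : ℝ := (a ^ 2)⁻¹ with hc
    have hc1 : c < 1 := by
      rw [hc, inv_lt_one_iff₀]; right; nlinarith
    have hc0 : 0 < c := by positivity
    have h1c : (0:ℝ) < 1 - c := by linarith
    set T : ℝ := (R * (1 - c))⁻¹ with hT
    have hTpos : 0 < T := by positivity
    -- closed form for inverse
    have hinv : ∀ n, (S n)⁻¹ = T + c ^ n * (Sig0⁻¹ - T) := by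
      intro n
      induction n with
      | zero => simp [hS0]
      | succ n ih =>
        have hSn := (hpos n).ne'
        have hden : (0:ℝ) < R + a ^ 2 * S n := by nlinarith [hpos n]
        have hstep : (S (n + 1))⁻¹ = c * (S n)⁻¹ + R⁻¹ := by
          rw [hrec]
          rw [hc]
          field_simp
        rw [hstep, ih]
        have hTR : c * T + R⁻¹ = T := by
          rw [hT]
          field_simp
          ring
        calc c * (T + c ^ n * (Sig0⁻¹ - T)) + R⁻¹
            = (c * T + R⁻¹) + c ^ (n + 1) * (Sig0⁻¹ - T) := by ring
          _ = T + c ^ (n + 1) * (Sig0⁻¹ - T) := by rw [hTR]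
    have hcn : Tendsto (fun n => c ^ n) atTop (nhds 0) :=
      tendsto_pow_atTop_nhds_zero_of_lt_one hc0.le hc1
    have htendinv : Tendsto (fun n => (S n)⁻¹) atTop (nhds T) := by
      have : Tendsto (fun n => T + c ^ n * (Sig0⁻¹ - T)) atTop (nhds (T + 0 * (Sig0⁻¹ - T))) :=
        tendsto_const_nhds.add (hcn.mul tendsto_const_nhds)
      simpa [hinv] using this
    have := htendinv.inv₀ hTpos.ne'
    have hTinv : T⁻¹ = (1 - (a ^ 2)⁻¹) * R := by
      rw [hT, inv_inv, hc]; ring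
    simpa [hTinv, inv_inv] using this
end
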